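/- Let A be a complex normed space, X a complex Banach space, and 𝕋¹ = {λ ∈ ℂ : |λ| = 1}. Suppose f : A → X satisfies f(0) = 0 and φ : A×A → [0,∞) is a function such that φ̃(x,y) := (1/2) Σ_{n=0}^∞ φ(2ⁿx, 2ⁿy) < ∞ for all x,y ∈ A, and ‖f(λx + λy) − λf(x) − λf(y)‖ ≤ φ(x,y) for all λ ∈ 𝕋¹ and all x,y ∈ A. Then for every x ∈ A the sequence (f(2ⁿx)/2ⁿ)_n converges, the map D : A → X defined by D(x) := lim_{n→∞} f(2ⁿx)/2ⁿ is ℂ-linear, satisfies ‖f(x) − D(x)‖ ≤ φ̃(x,x) for all x ∈ A, and D is the unique ℂ-linear map satisfying this inequality. -/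

import Mathlib

/-!
Hyers' direct method. Approximate additivity makes `n ↦ 2⁻ⁿ f (2ⁿ x)` Cauchy, with consecutive
gaps at most `φ (2ⁿ x) (2ⁿ x) / 2`, so it converges in the Banach space `X`, and the summed gaps
bound `‖f x - D x‖`. Passing to the limit in the hypothesis gives `D (λx + λy) = λ D x + λ D y`
for unimodular `λ`, so `D` is additive and commutes with unimodular scalars; as every complex
number is a natural multiple of a sum of two unimodular ones, `D` is ℂ-linear. Two such
approximations of `f` differ by a linear `L` with `‖L x‖ = 2⁻ⁿ ‖L (2ⁿ x)‖`, which is at most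
`2⁻ⁿ` times a tail of the convergent series, hence `L = 0`.
-/

open Filter Topology

section Dyadic

variable {E F : Type*} [NormedAddCommGroup E] [NormedSpace ℝ E]
  [NormedAddCommGroup F] [NormedSpace ℝ F]

noncomputable def dyadicRescale (f : E → F) (n : ℕ) (x : E) : F :=
  ((2 : ℝ) ^ n)⁻¹ • f ((2 ^ n : ℝ) • x)

noncomputable def dyadicLimit (f : E → F) (x : E) : F :=
  limUnder atTop fun n => dyadicRescale f n x

theorem norm_inv_two_pow_smul_le (n : ℕ) (v : F) : ‖((2 : ℝ) ^ n)⁻¹ • v‖ ≤ ‖v‖ := by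
  rw [norm_smul, norm_inv, norm_pow, Real.norm_two]
  exact inv_mul_le_of_le_mul₀ (by positivity) (by positivity)
    (le_mul_of_one_le_left (norm_nonneg v) (one_le_pow₀ one_le_two))

variable {f : E → F} {φ : E → E → ℝ}

theorem dyadicRescale_succ_sub (n : ℕ) (x : E) :
    dyadicRescale f (n + 1) x - dyadicRescale f n x =
      (1 / 2 : ℝ) • ((2 : ℝ) ^ n)⁻¹ •
        (f ((2 ^ n : ℝ) • x + (2 ^ n : ℝ) • x) - f ((2 ^ n : ℝ) • x) - f ((2 ^ n : ℝ) • x)) := by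
  have hdouble : ((2 : ℝ) ^ (n + 1)) • x = (2 ^ n : ℝ) • x + (2 ^ n : ℝ) • x := by
    rw [← two_smul ℝ, smul_smul, pow_succ']
  have hinv : ((2 : ℝ) ^ (n + 1))⁻¹ = 1 / 2 * ((2 : ℝ) ^ n)⁻¹ := by
    rw [pow_succ']; field_simp
  simp only [dyadicRescale, hdouble, hinv]
  module

theorem dist_dyadicRescale_succ_le (hadd : ∀ x y, ‖f (x + y) - f x - f y‖ ≤ φ x y)
    (x : E) (n : ℕ) :
    dist (dyadicRescale f n x) (dyadicRescale f (n + 1) x) ≤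
      1 / 2 * φ ((2 ^ n : ℝ) • x) ((2 ^ n : ℝ) • x) := by
  rw [dist_comm, dist_eq_norm, dyadicRescale_succ_sub, norm_smul,
    Real.norm_of_nonneg (by norm_num)]
  gcongr
  exact (norm_inv_two_pow_smul_le n _).trans (hadd _ _)

theorem cauchySeq_dyadicRescale (hadd : ∀ x y, ‖f (x + y) - f x - f y‖ ≤ φ x y) {x : E}
    (hsum : Summable fun n : ℕ => φ ((2 ^ n : ℝ) • x) ((2 ^ n : ℝ) • x)) :
    CauchySeq fun n => dyadicRescale f n x :=
  cauchySeq_of_dist_le_of_summable _ (dist_dyadicRescale_succ_le hadd x) (hsum.mul_left _)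

theorem LinearMap.eq_of_norm_sub_le_of_tendsto {ψ : E → ℝ} {D D' : E →ₗ[ℝ] F}
    (hD : ∀ x, ‖f x - D x‖ ≤ ψ x) (hD' : ∀ x, ‖f x - D' x‖ ≤ ψ x)
    (hψ : ∀ x, Tendsto (fun n : ℕ => ((2 : ℝ) ^ n)⁻¹ * ψ ((2 ^ n : ℝ) • x)) atTop (𝓝 0)) :
    D = D' := by
  ext x
  have hle : ∀ n : ℕ, ‖D x - D' x‖ ≤ 2 * (((2 : ℝ) ^ n)⁻¹ * ψ ((2 ^ n : ℝ) • x)) := by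
    intro n
    set y := (2 ^ n : ℝ) • x
    have hdiff : D x - D' x = ((2 : ℝ) ^ n)⁻¹ • ((f y - D' y) - (f y - D y)) := by
      rw [sub_sub_sub_cancel_left, map_smul, map_smul, ← smul_sub, inv_smul_smul₀ (by positivity)]
    rw [hdiff, norm_smul, norm_inv, norm_pow, Real.norm_two]
    calc ((2 : ℝ) ^ n)⁻¹ * ‖(f y - D' y) - (f y - D y)‖
        ≤ ((2 : ℝ) ^ n)⁻¹ * (ψ y + ψ y) := by
          gcongr
          exact (norm_sub_le _ _).trans (add_le_add (hD' y) (hD y))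
      _ = 2 * (((2 : ℝ) ^ n)⁻¹ * ψ y) := by ring
  have hzero : ‖D x - D' x‖ ≤ 0 := ge_of_tendsto' (by simpa using (hψ x).const_mul 2) hle
  exact sub_eq_zero.mp (norm_le_zero_iff.mp hzero)

theorem tendsto_inv_two_pow_mul_half_tsum (g : E → ℝ) (x : E) :
    Tendsto (fun n : ℕ => ((2 : ℝ) ^ n)⁻¹ * (1 / 2 * ∑' k : ℕ, g ((2 ^ k : ℝ) • (2 ^ n : ℝ) • x)))
      atTop (𝓝 0) := by
  have htail : Tendsto (fun n : ℕ => ∑' k : ℕ, g ((2 ^ k : ℝ) • (2 ^ n : ℝ) • x)) atTop (𝓝 0) := by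
    simpa only [smul_smul, ← pow_add] using tendsto_sum_nat_add fun m => g ((2 ^ m : ℝ) • x)
  have hinv : Tendsto (fun n : ℕ => ((2 : ℝ) ^ n)⁻¹) atTop (𝓝 0) :=
    tendsto_inv_atTop_zero.comp (tendsto_pow_atTop_atTop_of_one_lt one_lt_two)
  simpa only [mul_zero] using hinv.mul (htail.const_mul (1 / 2))

variable [CompleteSpace F]

theorem tendsto_dyadicLimit (hadd : ∀ x y, ‖f (x + y) - f x - f y‖ ≤ φ x y) {x : E}
    (hsum : Summable fun n : ℕ => φ ((2 ^ n : ℝ) • x) ((2 ^ n : ℝ) • x)) :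
    Tendsto (fun n => dyadicRescale f n x) atTop (𝓝 (dyadicLimit f x)) :=
  (cauchySeq_dyadicRescale hadd hsum).tendsto_limUnder

theorem norm_sub_dyadicLimit_le (hadd : ∀ x y, ‖f (x + y) - f x - f y‖ ≤ φ x y) {x : E}
    (hsum : Summable fun n : ℕ => φ ((2 ^ n : ℝ) • x) ((2 ^ n : ℝ) • x)) :
    ‖f x - dyadicLimit f x‖ ≤ 1 / 2 * ∑' n : ℕ, φ ((2 ^ n : ℝ) • x) ((2 ^ n : ℝ) • x) := by
  have h := dist_le_tsum_of_dist_le_of_tendsto₀ _ (dist_dyadicRescale_succ_le hadd x)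
    (hsum.mul_left _) (tendsto_dyadicLimit hadd hsum)
  rwa [tsum_mul_left, dist_eq_norm, dyadicRescale, pow_zero, inv_one, one_smul, one_smul] at h

end Dyadic

theorem Complex.exists_norm_eq_one_add_eq {c : ℂ} (hc : ‖c‖ ≤ 2) :
    ∃ a b : ℂ, ‖a‖ = 1 ∧ ‖b‖ = 1 ∧ a + b = c := by
  rcases eq_or_ne c 0 with rfl | hc0
  · exact ⟨1, -1, by simp, by simp, by simp⟩
  have hnorm : 0 < ‖c‖ := norm_pos_iff.mpr hc0
  -- `c = u (w + w̄)` with `u = c / ‖c‖` and `w` on the unit circle with real part `‖c‖ / 2`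
  set t := ‖c‖ / 2 with ht
  have ht0 : 0 ≤ t := by positivity
  have ht1 : t ≤ 1 := by linarith
  set w : ℂ := t + √(1 - t ^ 2) * Complex.I
  have hw : ‖w‖ = 1 := by
    rw [Complex.norm_add_mul_I, Real.sq_sqrt (by nlinarith), add_sub_cancel, Real.sqrt_one]
  have hu : ‖c / ‖c‖‖ = 1 := by
    rw [norm_div, Complex.norm_real, norm_norm, div_self hnorm.ne']
  refine ⟨c / ‖c‖ * w, c / ‖c‖ * (starRingEnd ℂ w), by rw [norm_mul, hu, hw, one_mul],
    by rw [norm_mul, hu, Complex.norm_conj, hw, one_mul], ?_⟩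
  rw [← mul_add, Complex.add_conj]
  have hnorm' : (‖c‖ : ℂ) ≠ 0 := by exact_mod_cast hnorm.ne'
  simp [w, t]
  field_simp

theorem map_smul_of_map_add_of_map_unit_smul {V W : Type*} [AddCommGroup V] [Module ℂ V]
    [AddCommGroup W] [Module ℂ W] {D : V → W} (hadd : ∀ x y, D (x + y) = D x + D y)
    (hunit : ∀ lam : ℂ, ‖lam‖ = 1 → ∀ x, D (lam • x) = lam • D x) (c : ℂ) (x : V) :
    D (c • x) = c • D x := by
  -- write `c = n (a + b)` with `n ∈ ℕ` and `a`, `b` on the unit circle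
  obtain ⟨n, hn⟩ := exists_nat_gt ‖c‖
  have hn0 : (n : ℂ) ≠ 0 := by
    exact_mod_cast ((norm_nonneg c).trans_lt hn).ne'
  obtain ⟨a, b, ha, hb, hab⟩ := Complex.exists_norm_eq_one_add_eq (c := c / n) (by
    rw [norm_div, Complex.norm_natCast, div_le_iff₀ ((norm_nonneg c).trans_lt hn)]
    linarith)
  have hnsmul : ∀ y, D (n • y) = n • D y := map_nsmul (AddMonoidHom.mk' D hadd) _
  calc D (c • x) = D (n • (a • x + b • x)) := by
        rw [← Nat.cast_smul_eq_nsmul ℂ, ← add_smul, hab, smul_smul, mul_div_cancel₀ _ hn0]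
    _ = c • D x := by
        rw [hnsmul, hadd, hunit a ha, hunit b hb, ← add_smul, hab, ← Nat.cast_smul_eq_nsmul ℂ,
          smul_smul, mul_div_cancel₀ _ hn0]

section Complex

variable {A X : Type*} [NormedAddCommGroup A] [NormedSpace ℂ A]
  [NormedAddCommGroup X] [NormedSpace ℂ X] [CompleteSpace X] {f : A → X} {φ : A → A → ℝ}

theorem dyadicLimit_smul_add
    (hf : ∀ lam : ℂ, ‖lam‖ = 1 → ∀ x y : A,
      ‖f (lam • x + lam • y) - lam • f x - lam • f y‖ ≤ φ x y)
    (hsum : ∀ x y : A, Summable fun n : ℕ => φ ((2 ^ n : ℝ) • x) ((2 ^ n : ℝ) • y))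
    {lam : ℂ} (hlam : ‖lam‖ = 1) (x y : A) :
    dyadicLimit f (lam • x + lam • y) = lam • dyadicLimit f x + lam • dyadicLimit f y := by
  have hadd : ∀ x y : A, ‖f (x + y) - f x - f y‖ ≤ φ x y := by simpa using hf 1 (by simp)
  have hlim := (tendsto_dyadicLimit hadd (hsum (lam • x + lam • y) (lam • x + lam • y))).sub
    (((tendsto_dyadicLimit hadd (hsum x x)).const_smul lam).add
      ((tendsto_dyadicLimit hadd (hsum y y)).const_smul lam))
  have hzero : Tendsto (fun n => dyadicRescale f n (lam • x + lam • y) -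
      (lam • dyadicRescale f n x + lam • dyadicRescale f n y)) atTop (𝓝 0) := by
    refine squeeze_zero_norm (fun n => ?_) (hsum x y).tendsto_atTop_zero
    have harg : (2 ^ n : ℝ) • (lam • x + lam • y) =
        lam • (2 ^ n : ℝ) • x + lam • (2 ^ n : ℝ) • y := by
      rw [smul_add, smul_comm _ lam x, smul_comm _ lam y]
    have hdiff : dyadicRescale f n (lam • x + lam • y) -
        (lam • dyadicRescale f n x + lam • dyadicRescale f n y) = ((2 : ℝ) ^ n)⁻¹ •
          (f (lam • (2 ^ n : ℝ) • x + lam • (2 ^ n : ℝ) • y) - lam • f ((2 ^ n : ℝ) • x) -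
            lam • f ((2 ^ n : ℝ) • y)) := by
      rw [dyadicRescale, dyadicRescale, dyadicRescale, harg, smul_comm lam _ (f _),
        smul_comm lam _ (f _), smul_sub, smul_sub, sub_sub]
    rw [hdiff]
    exact (norm_inv_two_pow_smul_le n _).trans (hf lam hlam _ _)
  exact sub_eq_zero.mp (tendsto_nhds_unique hlim hzero)

theorem dyadicLimit_add
    (hf : ∀ lam : ℂ, ‖lam‖ = 1 → ∀ x y : A,
      ‖f (lam • x + lam • y) - lam • f x - lam • f y‖ ≤ φ x y)
    (hsum : ∀ x y : A, Summable fun n : ℕ => φ ((2 ^ n : ℝ) • x) ((2 ^ n : ℝ) • y)) (x y : A) :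
    dyadicLimit f (x + y) = dyadicLimit f x + dyadicLimit f y := by
  simpa using dyadicLimit_smul_add hf hsum (lam := 1) (by simp) x y

theorem dyadicLimit_unit_smul
    (hf : ∀ lam : ℂ, ‖lam‖ = 1 → ∀ x y : A,
      ‖f (lam • x + lam • y) - lam • f x - lam • f y‖ ≤ φ x y)
    (hsum : ∀ x y : A, Summable fun n : ℕ => φ ((2 ^ n : ℝ) • x) ((2 ^ n : ℝ) • y))
    {lam : ℂ} (hlam : ‖lam‖ = 1) (x : A) :
    dyadicLimit f (lam • x) = lam • dyadicLimit f x := by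
  have h := dyadicLimit_smul_add hf hsum hlam x x
  rw [dyadicLimit_add hf hsum, ← two_smul ℂ, ← two_smul ℂ (lam • _)] at h
  exact smul_right_injective X two_ne_zero h

end Complex

theorem stability_cauchy_equation_general
    {A X : Type*}
    [NormedAddCommGroup A] [NormedSpace ℂ A]
    [NormedAddCommGroup X] [NormedSpace ℂ X] [CompleteSpace X]
    (f : A → X)
    (φ : A → A → ℝ)
    (hφsum : ∀ x y : A, Summable fun n : ℕ => φ ((2 ^ n : ℝ) • x) ((2 ^ n : ℝ) • y))
    (hfineq : ∀ lam : ℂ, ‖lam‖ = 1 → ∀ x y : A,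
      ‖f (lam • x + lam • y) - lam • f x - lam • f y‖ ≤ φ x y) :
    ∃ D : A →ₗ[ℂ] X,
      (∀ x : A, Tendsto (fun n : ℕ => ((2 : ℝ) ^ n)⁻¹ • f ((2 ^ n : ℝ) • x))
        atTop (𝓝 (D x))) ∧
      (∀ x : A, ‖f x - D x‖ ≤
        (1 / 2) * ∑' n : ℕ, φ ((2 ^ n : ℝ) • x) ((2 ^ n : ℝ) • x)) ∧
      (∀ D' : A →ₗ[ℂ] X, (∀ x : A, ‖f x - D' x‖ ≤
        (1 / 2) * ∑' n : ℕ, φ ((2 ^ n : ℝ) • x) ((2 ^ n : ℝ) • x)) → D' = D) := by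
  have hadd : ∀ x y : A, ‖f (x + y) - f x - f y‖ ≤ φ x y := by simpa using hfineq 1 (by simp)
  let D : A →ₗ[ℂ] X :=
    { toFun := dyadicLimit f
      map_add' := dyadicLimit_add hfineq hφsum
      map_smul' := map_smul_of_map_add_of_map_unit_smul (dyadicLimit_add hfineq hφsum)
        fun _ hlam => dyadicLimit_unit_smul hfineq hφsum hlam }
  have hD (x : A) := norm_sub_dyadicLimit_le hadd (hφsum x x)
  refine ⟨D, fun x => tendsto_dyadicLimit hadd (hφsum x x), hD, fun D' hD' => ?_⟩
  exact LinearMap.restrictScalars_injective ℝ <| LinearMap.eq_of_norm_sub_le_of_tendsto hD' hD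
    fun x => tendsto_inv_two_pow_mul_half_tsum (fun y => φ y y) x

/-- Stability of the Cauchy functional equation with a general control function
(Gavruta-type stability, used in the proof of Theorem 2.1): the sequence
`f(2ⁿx)/2ⁿ` converges to a ℂ-linear map `D` with `‖f(x) − D(x)‖ ≤ φ̃(x,x)`, and `D`
is the unique ℂ-linear map satisfying this inequality. -/
theorem stability_cauchy_equation
    {A X : Type*}
    [NormedAddCommGroup A] [NormedSpace ℂ A]
    [NormedAddCommGroup X] [NormedSpace ℂ X] [CompleteSpace X]
    (f : A → X) (hf0 : f 0 = 0)
    (φ : A → A → ℝ) (hφnonneg : ∀ x y, 0 ≤ φ x y)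
    (hφsum : ∀ x y : A, Summable fun n : ℕ => φ ((2 ^ n : ℝ) • x) ((2 ^ n : ℝ) • y))
    (hfineq : ∀ lam : ℂ, ‖lam‖ = 1 → ∀ x y : A,
      ‖f (lam • x + lam • y) - lam • f x - lam • f y‖ ≤ φ x y) :
    ∃ D : A →ₗ[ℂ] X,
      (∀ x : A, Tendsto (fun n : ℕ => ((2 : ℝ) ^ n)⁻¹ • f ((2 ^ n : ℝ) • x))
        atTop (𝓝 (D x))) ∧
      (∀ x : A, ‖f x - D x‖ ≤
        (1 / 2) * ∑' n : ℕ, φ ((2 ^ n : ℝ) • x) ((2 ^ n : ℝ) • x)) ∧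
      (∀ D' : A →ₗ[ℂ] X, (∀ x : A, ‖f x - D' x‖ ≤
        (1 / 2) * ∑' n : ℕ, φ ((2 ^ n : ℝ) • x) ((2 ^ n : ℝ) • x)) → D' = D) :=
  stability_cauchy_equation_general f φ hφsum hfineq
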